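/- For every integer d ≥ 1, the function ξ(ρ) = ρ·ε_F(ρ) − e(ρ) satisfies 0 ≤ ξ(ρ) ≤ 2d for every ρ ∈ (0,1), and ξ is strictly increasing on (0,1). -/

import Mathlib

open MeasureTheory

/-- The tight-binding dispersion relation `ε(k) = -2 Σᵢ cos kᵢ`. -/
noncomputable def eps (d : ℕ) (k : Fin d → ℝ) : ℝ := -2 * ∑ i, Real.cos (k i)

/-- `R(E) = (2π)^{-d} λ({k ∈ [-π,π]^d : ε(k) < E})`. -/
noncomputable def Rfun (d : ℕ) (E : ℝ) : ℝ :=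
  (volume {k : Fin d → ℝ | (∀ i, k i ∈ Set.Icc (-Real.pi) Real.pi) ∧ eps d k < E}).toReal
    / (2 * Real.pi) ^ d

/-- `(2π)^{-d} ∫_{k ∈ [-π,π]^d, ε(k) < E} ε(k) dk`. -/
noncomputable def en (d : ℕ) (E : ℝ) : ℝ :=
  (∫ k in {k : Fin d → ℝ | (∀ i, k i ∈ Set.Icc (-Real.pi) Real.pi) ∧ eps d k < E},
    eps d k) / (2 * Real.pi) ^ d

/-!
Normalise Lebesgue measure on `[-π,π]^d` to a probability measure `μ`. Then `ρ = μ{ε < ε_F}`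
and `ξ = ∫_{ε < ε_F} (ε_F - ε) dμ ≥ 0`. Since `∫ ε dμ = 0` and `ε ≤ 2d`, the energy `-e` is the
energy `∫_{ε ≥ ε_F} ε dμ ≤ 2d (1 - ρ)` of the empty states, while `ρ ε_F ≤ 2d ρ`.
For `ρ_a < ρ_b` the Fermi levels satisfy `E_a < E_b`, and the states filled in between have
energy below `E_b`, so `ξ_b - ξ_a ≥ ρ_a (E_b - E_a) > 0`.
-/

open Set ProbabilityTheory

section Sublevel

variable {α : Type*} [MeasurableSpace α] {μ : Measure α} {f : α → ℝ}

theorem setIntegral_le_mul_measureReal [IsFiniteMeasure μ] {s : Set α} {c : ℝ}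
    (hs : MeasurableSet s) (hf : IntegrableOn f s μ) (h : ∀ x ∈ s, f x ≤ c) :
    ∫ x in s, f x ∂μ ≤ c * μ.real s := by
  calc ∫ x in s, f x ∂μ ≤ ∫ _ in s, c ∂μ :=
        setIntegral_mono_on hf (integrableOn_const (measure_ne_top μ s)) hs h
    _ = c * μ.real s := by rw [setIntegral_const, smul_eq_mul, mul_comm]

/-- `sublevelExcess μ f E = ∫_{f < E} (E - f) dμ`; for the tight-binding band at the Fermi level
this is `ξ = ρ ε_F - e`. -/
noncomputable def sublevelExcess (μ : Measure α) (f : α → ℝ) (E : ℝ) : ℝ :=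
  μ.real {x | f x < E} * E - ∫ x in {x | f x < E}, f x ∂μ

theorem sublevelExcess_nonneg [IsFiniteMeasure μ] (hf : Measurable f) (hfi : Integrable f μ)
    (E : ℝ) : 0 ≤ sublevelExcess μ f E := by
  have := setIntegral_le_mul_measureReal (measurableSet_lt hf measurable_const)
    hfi.integrableOn (fun x (hx : f x < E) => hx.le)
  rw [sublevelExcess]
  linarith

theorem setIntegral_lt_sub_setIntegral_lt_le [IsFiniteMeasure μ] (hf : Measurable f)
    (hfi : Integrable f μ) {E E' : ℝ} (hE : E ≤ E') :
    ∫ x in {x | f x < E'}, f x ∂μ - ∫ x in {x | f x < E}, f x ∂μ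
      ≤ E' * (μ.real {x | f x < E'} - μ.real {x | f x < E}) := by
  have hsub : {x | f x < E} ⊆ {x | f x < E'} := fun x (hx : f x < E) => hx.trans_le hE
  have hmeas : MeasurableSet {x | f x < E} := measurableSet_lt hf measurable_const
  rw [← setIntegral_sdiff hmeas hfi.integrableOn hsub, ← measureReal_sdiff hsub hmeas]
  exact setIntegral_le_mul_measureReal ((measurableSet_lt hf measurable_const).diff hmeas)
    hfi.integrableOn (fun x hx => hx.1.le)

theorem sublevelExcess_lt_of_measureReal_lt [IsFiniteMeasure μ] (hf : Measurable f)
    (hfi : Integrable f μ) {E E' : ℝ} (hpos : 0 < μ.real {x | f x < E})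
    (hlt : μ.real {x | f x < E} < μ.real {x | f x < E'}) :
    sublevelExcess μ f E < sublevelExcess μ f E' := by
  have hE : E < E' := by
    by_contra! h
    exact (measureReal_mono fun x (hx : f x < E') => hx.trans_le h).not_gt hlt
  have := setIntegral_lt_sub_setIntegral_lt_le hf hfi hE.le
  rw [sublevelExcess, sublevelExcess]
  nlinarith

theorem sublevelExcess_le [IsProbabilityMeasure μ] (hf : Measurable f) (hfi : Integrable f μ)
    {M E : ℝ} (h0 : ∫ x, f x ∂μ = 0) (hM : ∀ x, f x ≤ M) (hE : E ≤ M) :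
    sublevelExcess μ f E ≤ M := by
  have hmeas : MeasurableSet {x | f x < E} := measurableSet_lt hf measurable_const
  have hcompl : -∫ x in {x | f x < E}, f x ∂μ ≤ M * (1 - μ.real {x | f x < E}) := by
    have hsplit := integral_add_compl hmeas hfi
    rw [h0] at hsplit
    rw [← probReal_compl_eq_one_sub hmeas, ← eq_neg_of_add_eq_zero_right hsplit]
    exact setIntegral_le_mul_measureReal hmeas.compl hfi.integrableOn (fun x _ => hM x)
  have hρ : μ.real {x | f x < E} * E ≤ μ.real {x | f x < E} * M :=
    mul_le_mul_of_nonneg_left hE measureReal_nonneg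
  rw [sublevelExcess]
  linarith

end Sublevel

def brillouinZone (d : ℕ) : Set (Fin d → ℝ) := univ.pi fun _ => Icc (-Real.pi) Real.pi

noncomputable def brillouinMeasure (d : ℕ) : Measure (Fin d → ℝ) := volume[|brillouinZone d]

theorem measurableSet_brillouinZone (d : ℕ) : MeasurableSet (brillouinZone d) :=
  MeasurableSet.univ_pi fun _ => measurableSet_Icc

theorem volume_brillouinZone (d : ℕ) :
    volume (brillouinZone d) = ENNReal.ofReal ((2 * Real.pi) ^ d) := by
  rw [brillouinZone, volume_pi_pi, ENNReal.ofReal_pow Real.two_pi_pos.le]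
  simp [Real.volume_Icc, two_mul]

instance (d : ℕ) : IsProbabilityMeasure (brillouinMeasure d) :=
  cond_isProbabilityMeasure_of_finite (by simp [volume_brillouinZone, Real.pi_pos])
    (by simp [volume_brillouinZone])

theorem brillouinMeasure_real_apply (d : ℕ) (s : Set (Fin d → ℝ)) :
    (brillouinMeasure d).real s
      = (volume (brillouinZone d ∩ s)).toReal / (2 * Real.pi) ^ d := by
  rw [measureReal_def, brillouinMeasure, cond_apply (measurableSet_brillouinZone d),
    ENNReal.toReal_mul, ENNReal.toReal_inv, volume_brillouinZone,
    ENNReal.toReal_ofReal (by positivity), inv_mul_eq_div]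

theorem setIntegral_brillouinMeasure (d : ℕ) {s : Set (Fin d → ℝ)} (hs : MeasurableSet s)
    (g : (Fin d → ℝ) → ℝ) :
    ∫ k in s, g k ∂brillouinMeasure d = (∫ k in brillouinZone d ∩ s, g k) / (2 * Real.pi) ^ d := by
  rw [brillouinMeasure, ProbabilityTheory.cond, Measure.restrict_smul, integral_smul_measure,
    Measure.restrict_restrict hs, inter_comm, ENNReal.toReal_inv, volume_brillouinZone,
    ENNReal.toReal_ofReal (by positivity), smul_eq_mul, inv_mul_eq_div]

theorem continuous_eps (d : ℕ) : Continuous (eps d) := by unfold eps; fun_prop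

theorem abs_eps_le (d : ℕ) (k : Fin d → ℝ) : |eps d k| ≤ 2 * d := by
  have : |∑ i, Real.cos (k i)| ≤ d := by
    calc |∑ i, Real.cos (k i)| ≤ ∑ i, |Real.cos (k i)| := Finset.abs_sum_le_sum_abs _ _
      _ ≤ ∑ _i : Fin d, (1 : ℝ) := Finset.sum_le_sum fun i _ => Real.abs_cos_le_one _
      _ = d := by simp
  rw [eps, abs_mul]
  norm_num
  linarith

theorem integrable_eps (d : ℕ) : Integrable (eps d) (brillouinMeasure d) :=
  .of_bound (continuous_eps d).aestronglyMeasurable (2 * d) (.of_forall (abs_eps_le d))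

theorem setOf_eps_lt_eq_inter (d : ℕ) (E : ℝ) :
    {k : Fin d → ℝ | (∀ i, k i ∈ Icc (-Real.pi) Real.pi) ∧ eps d k < E}
      = brillouinZone d ∩ {k | eps d k < E} := by
  ext k
  simp only [brillouinZone, mem_inter_iff, mem_univ_pi, mem_ofPred_eq]

theorem Rfun_eq_measureReal (d : ℕ) (E : ℝ) :
    Rfun d E = (brillouinMeasure d).real {k | eps d k < E} := by
  rw [Rfun, brillouinMeasure_real_apply, setOf_eps_lt_eq_inter]

theorem en_eq_setIntegral (d : ℕ) (E : ℝ) :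
    en d E = ∫ k in {k | eps d k < E}, eps d k ∂brillouinMeasure d := by
  rw [en, setIntegral_brillouinMeasure d (measurableSet_lt (continuous_eps d).measurable
    measurable_const), setOf_eps_lt_eq_inter]

theorem setIntegral_brillouinZone_cos_eval (d : ℕ) (i : Fin d) :
    ∫ k in brillouinZone d, Real.cos (k i) = 0 := by
  have hprod : (fun k : Fin d → ℝ => Real.cos (k i))
      = fun k => ∏ j, (if j = i then Real.cos else fun _ => 1) (k j) := by
    ext k
    simp [ite_apply]
  rw [brillouinZone, volume_pi, Measure.restrict_pi_pi, hprod, integral_fintype_prod_eq_prod]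
  refine Finset.prod_eq_zero (Finset.mem_univ i) ?_
  rw [if_pos rfl, integral_Icc_eq_integral_Ioc, ← intervalIntegral.integral_of_le
    (neg_le_self Real.pi_pos.le), integral_cos]
  simp [Real.sin_neg]

theorem integral_eps_brillouinMeasure (d : ℕ) : ∫ k, eps d k ∂brillouinMeasure d = 0 := by
  rw [← setIntegral_univ, setIntegral_brillouinMeasure d MeasurableSet.univ, inter_univ]
  have hcos (i : Fin d) : IntegrableOn (fun k : Fin d → ℝ => Real.cos (k i)) (brillouinZone d) :=
    (Real.continuous_cos.comp (continuous_apply i)).continuousOn.integrableOn_compact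
      (isCompact_univ_pi fun _ => isCompact_Icc)
  simp only [eps]
  rw [integral_const_mul, integral_finsetSum _ fun i _ => hcos i]
  simp [setIntegral_brillouinZone_cos_eval]

theorem stmt4_general (d : ℕ) (εF e : ℝ → ℝ)
    (hεF : ∀ ρ ∈ Set.Ioo (0:ℝ) 1,
      εF ρ ∈ Set.Ioo (-(2*(d:ℝ))) (2*(d:ℝ)) ∧ Rfun d (εF ρ) = ρ)
    (he : ∀ ρ ∈ Set.Ioo (0:ℝ) 1, e ρ = en d (εF ρ)) :
    (∀ ρ ∈ Set.Ioo (0:ℝ) 1, 0 ≤ ρ * εF ρ - e ρ ∧ ρ * εF ρ - e ρ ≤ 2*(d:ℝ)) ∧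
    StrictMonoOn (fun ρ => ρ * εF ρ - e ρ) (Set.Ioo (0:ℝ) 1) := by
  have hfill : ∀ ρ ∈ Ioo (0:ℝ) 1, (brillouinMeasure d).real {k | eps d k < εF ρ} = ρ :=
    fun ρ hρ => (Rfun_eq_measureReal d _).symm.trans (hεF ρ hρ).2
  have hξ : ∀ ρ ∈ Ioo (0:ℝ) 1,
      ρ * εF ρ - e ρ = sublevelExcess (brillouinMeasure d) (eps d) (εF ρ) := fun ρ hρ => by
    rw [he ρ hρ, en_eq_setIntegral, sublevelExcess, hfill ρ hρ]
  have hm := (continuous_eps d).measurable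
  have hi := integrable_eps d
  refine ⟨fun ρ hρ => ?_, fun a ha b hb hab => ?_⟩
  · rw [hξ ρ hρ]
    exact ⟨sublevelExcess_nonneg hm hi _, sublevelExcess_le hm hi (integral_eps_brillouinMeasure d)
      (fun k => (abs_le.mp (abs_eps_le d k)).2) (hεF ρ hρ).1.2.le⟩
  · simp only [hξ a ha, hξ b hb]
    refine sublevelExcess_lt_of_measureReal_lt hm hi ?_ ?_ <;> rw [hfill a ha]
    · exact ha.1
    · rwa [hfill b hb]

/-- With `εF` the Fermi energy and `e` the free-electron energy density, the
function `ξ(ρ) = ρ·εF(ρ) - e(ρ)` satisfies `0 ≤ ξ(ρ) ≤ 2d` on `(0,1)` and is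
strictly increasing on `(0,1)`. -/
theorem stmt4 (d : ℕ) (hd : 1 ≤ d) (εF e : ℝ → ℝ)
    (hεF : ∀ ρ ∈ Set.Ioo (0:ℝ) 1,
      εF ρ ∈ Set.Ioo (-(2*(d:ℝ))) (2*(d:ℝ)) ∧ Rfun d (εF ρ) = ρ)
    (he : ∀ ρ ∈ Set.Ioo (0:ℝ) 1, e ρ = en d (εF ρ)) :
    (∀ ρ ∈ Set.Ioo (0:ℝ) 1, 0 ≤ ρ * εF ρ - e ρ ∧ ρ * εF ρ - e ρ ≤ 2*(d:ℝ)) ∧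
    StrictMonoOn (fun ρ => ρ * εF ρ - e ρ) (Set.Ioo (0:ℝ) 1) :=
  stmt4_general d εF e hεF he
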